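/- arXiv:2010.11293 — 4 statements merged into one kernel-verified Lean document; each statement's English description precedes it below -/
import Mathlib

section
/- (Short snake lemma) Let E be a deflation-exact category satisfying axiom (R3+). Consider a commutative diagram whose rows A₁ ↣ A₂ ↠ A₃ and B₁ ↣ B₂ ↠ B₃ are conflations and whose vertical morphisms f₁, f₂, f₃ are admissible. Write Kᵢ = ker(fᵢ) and Cᵢ = coker(fᵢ). Then there exists a natural connecting morphism δ : K₃ → C₁ such that the sequence 0 → K₁ → K₂ → K₃ →δ C₁ → C₂ → C₃ → 0 is exact, where K₁ → K₂, K₂ → K₃, C₁ → C₂, C₂ → C₃ are the morphisms induced by the diagram, the morphism K₁ → K₂ is an inflation and C₂ → C₃ is a deflation. -/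
open CategoryTheory CategoryTheory.Limits ZeroObject

attribute [local instance] CategoryTheory.Limits.hasBinaryBiproducts_of_finite_biproducts

universe v u

section Preamble

variable {C : Type u} [Category.{v} C] [Preadditive C] [HasZeroObject C]
  [HasFiniteBiproducts C]

/-- `(f, g)` is a kernel-cokernel pair: `f` is a kernel of `g` and `g` is a cokernel of `f`. -/
structure IsKernelCokernelPair {X Y Z : C} (f : X ⟶ Y) (g : Y ⟶ Z) : Prop where
  comp_zero : f ≫ g = 0
  isKernel : Nonempty (IsLimit (KernelFork.ofι f comp_zero))
  isCokernel : Nonempty (IsColimit (CokernelCofork.ofπ g comp_zero))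

/-- `k` is a kernel of `g`. -/
def IsKernelOf {K Y Z : C} (k : K ⟶ Y) (g : Y ⟶ Z) : Prop :=
  ∃ w : k ≫ g = 0, Nonempty (IsLimit (KernelFork.ofι k w))

/-- `c` is a cokernel of `f`. -/
def IsCokernelOf {X Y Q : C} (c : Y ⟶ Q) (f : X ⟶ Y) : Prop :=
  ∃ w : f ≫ c = 0, Nonempty (IsColimit (CokernelCofork.ofπ c w))

/-- All pullbacks along `g` exist. -/
def HasAllPullbacksAlong {Y Z : C} (g : Y ⟶ Z) : Prop :=
  ∀ ⦃W : C⦄ (h : W ⟶ Z), ∃ (P : C) (p₁ : P ⟶ Y) (p₂ : P ⟶ W), IsPullback p₁ p₂ g h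

/-- An additive category is weakly idempotent complete if every retraction has a kernel. -/
def WeaklyIdempotentComplete (C : Type u) [Category.{v} C] [Preadditive C]
    [HasZeroObject C] [HasFiniteBiproducts C] : Prop :=
  ∀ ⦃X Y : C⦄ (r : X ⟶ Y), (∃ s : Y ⟶ X, s ≫ r = 𝟙 Y) → HasKernel r

end Preamble

/-- A conflation structure on an additive category: a class of kernel-cokernel pairs
closed under isomorphisms.  The first morphism of a conflation is called an inflation,
the second a deflation. -/
structure ConflationStruct (C : Type u) [Category.{v} C] [Preadditive C]
    [HasZeroObject C] [HasFiniteBiproducts C] where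
  IsConflation : ∀ ⦃X Y Z : C⦄, (X ⟶ Y) → (Y ⟶ Z) → Prop
  kernelCokernel : ∀ ⦃X Y Z : C⦄ ⦃f : X ⟶ Y⦄ ⦃g : Y ⟶ Z⦄,
    IsConflation f g → IsKernelCokernelPair f g
  iso_closed : ∀ ⦃X Y Z X' Y' Z' : C⦄ ⦃f : X ⟶ Y⦄ ⦃g : Y ⟶ Z⦄ ⦃f' : X' ⟶ Y'⦄ ⦃g' : Y' ⟶ Z'⦄
    (eX : X ≅ X') (eY : Y ≅ Y') (eZ : Z ≅ Z'),
    f ≫ eY.hom = eX.hom ≫ f' → g ≫ eZ.hom = eY.hom ≫ g' →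
    IsConflation f g → IsConflation f' g'

namespace ConflationStruct

variable {C : Type u} [Category.{v} C] [Preadditive C] [HasZeroObject C]
  [HasFiniteBiproducts C] (S : ConflationStruct C)

/-- A morphism is an inflation if it is the first morphism of some conflation. -/
def IsInflation {X Y : C} (f : X ⟶ Y) : Prop := ∃ (Z : C) (g : Y ⟶ Z), S.IsConflation f g

/-- A morphism is a deflation if it is the second morphism of some conflation. -/
def IsDeflation {Y Z : C} (g : Y ⟶ Z) : Prop := ∃ (X : C) (f : X ⟶ Y), S.IsConflation f g

/-- A deflation-exact category: axioms (R0), (R1), (R2). -/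
structure IsDeflationExact : Prop where
  R0 : S.IsDeflation (𝟙 (0 : C))
  R1 : ∀ ⦃X Y Z : C⦄ ⦃g : X ⟶ Y⦄ ⦃h : Y ⟶ Z⦄,
    S.IsDeflation g → S.IsDeflation h → S.IsDeflation (g ≫ h)
  R2 : ∀ ⦃Y Z : C⦄ ⦃g : Y ⟶ Z⦄, S.IsDeflation g → ∀ ⦃W : C⦄ (h : W ⟶ Z),
    ∃ (P : C) (p₁ : P ⟶ Y) (p₂ : P ⟶ W), IsPullback p₁ p₂ g h ∧ S.IsDeflation p₂

/-- An inflation-exact category: axioms (L0), (L1), (L2). -/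
structure IsInflationExact : Prop where
  L0 : S.IsInflation (𝟙 (0 : C))
  L1 : ∀ ⦃X Y Z : C⦄ ⦃f : X ⟶ Y⦄ ⦃g : Y ⟶ Z⦄,
    S.IsInflation f → S.IsInflation g → S.IsInflation (f ≫ g)
  L2 : ∀ ⦃X Y : C⦄ ⦃f : X ⟶ Y⦄, S.IsInflation f → ∀ ⦃W : C⦄ (h : X ⟶ W),
    ∃ (Q : C) (q₁ : Y ⟶ Q) (q₂ : W ⟶ Q), IsPushout f h q₁ q₂ ∧ S.IsInflation q₂

/-- Axiom (R0*): for every object `A`, the morphism `A ⟶ 0` is a deflation. -/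
def AxiomR0star : Prop := ∀ A : C, S.IsDeflation (0 : A ⟶ (0 : C))

/-- Axiom (R3), the obscure axiom: if `p` has a kernel and `i ≫ p` is a deflation,
then `p` is a deflation. -/
def AxiomR3 : Prop := ∀ ⦃A B Q : C⦄ (i : A ⟶ B) (p : B ⟶ Q),
  HasKernel p → S.IsDeflation (i ≫ p) → S.IsDeflation p

/-- Axiom (R3−): if `f ≫ g` is a deflation and all pullbacks along `g` exist,
then `g` is a deflation. -/
def AxiomR3minus : Prop := ∀ ⦃X Y Z : C⦄ (f : X ⟶ Y) (g : Y ⟶ Z),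
  S.IsDeflation (f ≫ g) → HasAllPullbacksAlong g → S.IsDeflation g

/-- Axiom (R3+): if `f ≫ g` is a deflation, then `g` is a deflation. -/
def AxiomR3plus : Prop := ∀ ⦃X Y Z : C⦄ (f : X ⟶ Y) (g : Y ⟶ Z),
  S.IsDeflation (f ≫ g) → S.IsDeflation g

/-- A morphism is admissible if it factors as a deflation followed by an inflation. -/
def IsAdmissible {X Y : C} (f : X ⟶ Y) : Prop :=
  ∃ (I : C) (e : X ⟶ I) (m : I ⟶ Y), S.IsDeflation e ∧ S.IsInflation m ∧ e ≫ m = f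

/-- Exactness of a pair of composable admissible morphisms at the middle object:
the inflation (image) part of `f` is a kernel of `g`, and the deflation (coimage)
part of `g` is a cokernel of `f`. -/
def ExactAt {X Y Z : C} (f : X ⟶ Y) (g : Y ⟶ Z) : Prop :=
  (∃ (I : C) (e : X ⟶ I) (m : I ⟶ Y),
    S.IsDeflation e ∧ S.IsInflation m ∧ e ≫ m = f ∧ IsKernelOf m g) ∧
  (∃ (J : C) (e' : Y ⟶ J) (m' : J ⟶ Z),
    S.IsDeflation e' ∧ S.IsInflation m' ∧ e' ≫ m' = g ∧ IsCokernelOf e' f)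

/-- A `P`-deflation: (P1) all pullbacks along `f` exist, and (P2) there is a morphism
`h` such that `h ≫ f` is a deflation. -/
def IsPDeflation {X Y : C} (f : X ⟶ Y) : Prop :=
  HasAllPullbacksAlong f ∧ ∃ (W : C) (h : W ⟶ X), S.IsDeflation (h ≫ f)

end ConflationStruct

section SnakeHelpers
set_option linter.unusedSectionVars false

variable {C : Type u} [Category.{v} C] [Preadditive C] [HasZeroObject C]
  [HasFiniteBiproducts C]

lemma IsKernelOf.mono' {K Y Z : C} {k : K ⟶ Y} {g : Y ⟶ Z} (h : IsKernelOf k g) : Mono k := by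
  obtain ⟨w, ⟨hl⟩⟩ := h
  exact mono_of_isLimit_fork hl

lemma IsKernelOf.w {K Y Z : C} {k : K ⟶ Y} {g : Y ⟶ Z} (h : IsKernelOf k g) : k ≫ g = 0 := h.1

lemma IsKernelOf.lift {K Y Z : C} {k : K ⟶ Y} {g : Y ⟶ Z} (h : IsKernelOf k g)
    {W : C} (v : W ⟶ Y) (hv : v ≫ g = 0) : ∃ l : W ⟶ K, l ≫ k = v := by
  obtain ⟨w, ⟨hl⟩⟩ := h
  obtain ⟨l, hl'⟩ := KernelFork.IsLimit.lift' hl v hv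
  exact ⟨l, hl'⟩

lemma isKernelOf_mk {K Y Z : C} {k : K ⟶ Y} {g : Y ⟶ Z} (w : k ≫ g = 0) (hm : Mono k)
    (lift : ∀ ⦃W : C⦄ (v : W ⟶ Y), v ≫ g = 0 → ∃ l : W ⟶ K, l ≫ k = v) : IsKernelOf k g := by
  haveI := hm
  exact ⟨w, ⟨KernelFork.IsLimit.ofι' k w
    (fun {A} v hv => ⟨(lift v hv).choose, (lift v hv).choose_spec⟩)⟩⟩

lemma IsKernelOf.comp_mono {K Y Z W : C} {k : K ⟶ Y} {g : Y ⟶ Z} (h : IsKernelOf k g)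
    (m : Z ⟶ W) (hm : Mono m) : IsKernelOf k (g ≫ m) := by
  haveI := hm
  refine isKernelOf_mk (by rw [← Category.assoc, h.w, zero_comp]) h.mono' ?_
  intro W' v hv
  exact h.lift v (by rwa [← cancel_mono m, Category.assoc, zero_comp])

lemma IsCokernelOf.epi' {X Y Q : C} {c : Y ⟶ Q} {f : X ⟶ Y} (h : IsCokernelOf c f) : Epi c := by
  obtain ⟨w, ⟨hl⟩⟩ := h
  exact epi_of_isColimit_cofork hl

lemma IsCokernelOf.w {X Y Q : C} {c : Y ⟶ Q} {f : X ⟶ Y} (h : IsCokernelOf c f) : f ≫ c = 0 := h.1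

lemma IsCokernelOf.desc {X Y Q : C} {c : Y ⟶ Q} {f : X ⟶ Y} (h : IsCokernelOf c f)
    {W : C} (v : Y ⟶ W) (hv : f ≫ v = 0) : ∃ l : Q ⟶ W, c ≫ l = v := by
  obtain ⟨w, ⟨hl⟩⟩ := h
  obtain ⟨l, hl'⟩ := CokernelCofork.IsColimit.desc' hl v hv
  exact ⟨l, hl'⟩

lemma isCokernelOf_mk {X Y Q : C} {c : Y ⟶ Q} {f : X ⟶ Y} (w : f ≫ c = 0) (he : Epi c)
    (desc : ∀ ⦃W : C⦄ (v : Y ⟶ W), f ≫ v = 0 → ∃ l : Q ⟶ W, c ≫ l = v) : IsCokernelOf c f := by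
  haveI := he
  exact ⟨w, ⟨CokernelCofork.IsColimit.ofπ' c w
    (fun {A} v hv => ⟨(desc v hv).choose, (desc v hv).choose_spec⟩)⟩⟩

lemma IsCokernelOf.epi_comp {X Y Q W : C} {c : Y ⟶ Q} {f : X ⟶ Y} (h : IsCokernelOf c f)
    (e : W ⟶ X) (he : Epi e) : IsCokernelOf c (e ≫ f) := by
  haveI := he
  refine isCokernelOf_mk (by rw [Category.assoc, h.w, comp_zero]) h.epi' ?_
  intro W' v hv
  exact h.desc v (by rwa [← cancel_epi e, ← Category.assoc, comp_zero])

lemma IsKernelOf.iso {K K' Y Z : C} {k : K ⟶ Y} {k' : K' ⟶ Y} {g : Y ⟶ Z}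
    (h : IsKernelOf k g) (h' : IsKernelOf k' g) : ∃ e : K ≅ K', e.hom ≫ k' = k := by
  obtain ⟨w, ⟨hl⟩⟩ := h
  obtain ⟨w', ⟨hl'⟩⟩ := h'
  exact ⟨IsLimit.conePointUniqueUpToIso hl hl',
    IsLimit.conePointUniqueUpToIso_hom_comp hl hl' WalkingParallelPair.zero⟩

end SnakeHelpers

namespace ConflationStruct

section SnakeHelpersS

set_option linter.unusedSectionVars false

variable {C : Type u} [Category.{v} C] [Preadditive C] [HasZeroObject C]
  [HasFiniteBiproducts C] {S : ConflationStruct C}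

lemma IsConflation.isKernelOf {X Y Z : C} {f : X ⟶ Y} {g : Y ⟶ Z}
    (h : S.IsConflation f g) : IsKernelOf f g :=
  ⟨(S.kernelCokernel h).comp_zero, (S.kernelCokernel h).isKernel⟩

lemma IsConflation.isCokernelOf {X Y Z : C} {f : X ⟶ Y} {g : Y ⟶ Z}
    (h : S.IsConflation f g) : IsCokernelOf g f :=
  ⟨(S.kernelCokernel h).comp_zero, (S.kernelCokernel h).isCokernel⟩

lemma IsConflation.isInflation {X Y Z : C} {f : X ⟶ Y} {g : Y ⟶ Z}
    (h : S.IsConflation f g) : S.IsInflation f := ⟨Z, g, h⟩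

lemma IsConflation.isDeflation {X Y Z : C} {f : X ⟶ Y} {g : Y ⟶ Z}
    (h : S.IsConflation f g) : S.IsDeflation g := ⟨X, f, h⟩

lemma IsInflation.mono {X Y : C} {f : X ⟶ Y} (h : S.IsInflation f) : Mono f := by
  obtain ⟨Z, g, hc⟩ := h
  exact hc.isKernelOf.mono'

lemma IsDeflation.epi {Y Z : C} {g : Y ⟶ Z} (h : S.IsDeflation g) : Epi g := by
  obtain ⟨X, f, hc⟩ := h
  exact hc.isCokernelOf.epi'

lemma conflation_of_isKernelOf {K Y Z : C} {k : K ⟶ Y} {g : Y ⟶ Z}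
    (hg : S.IsDeflation g) (hk : IsKernelOf k g) : S.IsConflation k g := by
  obtain ⟨X, f, hc⟩ := hg
  obtain ⟨e, he⟩ := hc.isKernelOf.iso hk
  exact S.iso_closed e (Iso.refl Y) (Iso.refl Z)
    (by simpa using he.symm) (by simp) hc

lemma isDeflation_iso_comp {Y' Y Z : C} (e : Y' ≅ Y) {g : Y ⟶ Z}
    (hg : S.IsDeflation g) : S.IsDeflation (e.hom ≫ g) := by
  obtain ⟨X, f, hc⟩ := hg
  exact ⟨X, f ≫ e.inv, S.iso_closed (Iso.refl X) e.symm (Iso.refl Z)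
    (by simp) (by simp) hc⟩

lemma isDeflation_zero_to_zero (hDE : S.IsDeflationExact) (hR3p : S.AxiomR3plus) (A : C) :
    S.IsDeflation (0 : A ⟶ (0 : C)) := by
  apply hR3p (0 : (0 : C) ⟶ A)
  have h : (0 : (0 : C) ⟶ A) ≫ (0 : A ⟶ (0 : C)) = 𝟙 (0 : C) := by simp
  rw [h]
  exact hDE.R0

lemma isDeflation_id (hDE : S.IsDeflationExact) (hR3p : S.AxiomR3plus) (A : C) :
    S.IsDeflation (𝟙 A) := by
  obtain ⟨P, p₁, p₂, hpb, hp₂⟩ := hDE.R2 hDE.R0 (0 : A ⟶ (0 : C))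
  have hsq : (0 : A ⟶ (0:C)) ≫ 𝟙 (0:C) = 𝟙 A ≫ (0 : A ⟶ (0:C)) := by simp
  set ℓ := hpb.lift (0 : A ⟶ (0:C)) (𝟙 A) hsq with hℓdef
  have hℓ₂ : ℓ ≫ p₂ = 𝟙 A := hpb.lift_snd _ _ _
  have hinv : p₂ ≫ ℓ = 𝟙 P := by
    apply hpb.hom_ext
    · exact (isZero_zero C).eq_of_tgt _ _
    · rw [Category.assoc, hℓ₂, Category.comp_id, Category.id_comp]
  have := isDeflation_iso_comp (S := S) ⟨ℓ, p₂, hℓ₂, hinv⟩ hp₂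
  simpa [hℓ₂] using this

lemma conflation_id_zero (hDE : S.IsDeflationExact) (hR3p : S.AxiomR3plus) (A : C) :
    S.IsConflation (𝟙 A) (0 : A ⟶ (0 : C)) := by
  refine conflation_of_isKernelOf (isDeflation_zero_to_zero hDE hR3p A) ?_
  refine isKernelOf_mk (by simp) (by infer_instance) ?_
  intro W v _
  exact ⟨v, by simp⟩

lemma conflation_zero_id (hDE : S.IsDeflationExact) (hR3p : S.AxiomR3plus) (A : C) :
    S.IsConflation (0 : (0 : C) ⟶ A) (𝟙 A) := by
  refine conflation_of_isKernelOf (isDeflation_id hDE hR3p A) ?_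
  refine isKernelOf_mk (by simp) ⟨fun g h _ => (isZero_zero C).eq_of_tgt g h⟩ ?_
  intro W v hv
  refine ⟨0, ?_⟩
  rw [zero_comp]
  simpa using hv.symm

end SnakeHelpersS

end ConflationStruct
namespace ConflationStruct

section SnakeHelpers2

set_option linter.unusedSectionVars false

variable {C : Type u} [Category.{v} C] [Preadditive C] [HasZeroObject C]
  [HasFiniteBiproducts C] {S : ConflationStruct C}

/-- Kernels of a composition of two deflations: given a conflation `(ka, a)`,
a kernel `kb` of a deflation `b`, and a kernel `n` of `a ≫ b`, there are induced
morphisms `α : Ka ⟶ N` and `β : N ⟶ Kb` forming a conflation. -/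
lemma ker_comp (hDE : S.IsDeflationExact)
    {X Y Z Ka Kb N : C} {a : X ⟶ Y} {b : Y ⟶ Z}
    {ka : Ka ⟶ X} {kb : Kb ⟶ Y} {n : N ⟶ X}
    (hca : S.IsConflation ka a) (hkb : IsKernelOf kb b) (hbd : S.IsDeflation b)
    (hn : IsKernelOf n (a ≫ b)) :
    ∃ (α : Ka ⟶ N) (β : N ⟶ Kb), α ≫ n = ka ∧ β ≫ kb = n ≫ a ∧ S.IsConflation α β := by
  obtain ⟨P, p₁, p₂, hpb, hp₂⟩ := hDE.R2 hca.isDeflation kb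
  -- p₁ : P ⟶ X, p₂ : P ⟶ Kb, square p₁ ≫ a = p₂ ≫ kb
  have hw : p₁ ≫ a = p₂ ≫ kb := hpb.w
  have hmono_p₁ : Mono p₁ := by
    constructor
    intro W s s' hss
    apply hpb.hom_ext hss
    have := hkb.mono'
    rw [← cancel_mono kb, Category.assoc, Category.assoc, ← hw,
      ← Category.assoc, ← Category.assoc, hss]
  -- p₁ is a kernel of a ≫ b
  have hp₁ker : IsKernelOf p₁ (a ≫ b) := by
    refine isKernelOf_mk ?_ hmono_p₁ ?_
    · rw [← Category.assoc, hw, Category.assoc, hkb.w, comp_zero]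
    · intro W v hv
      obtain ⟨w, hwv⟩ := hkb.lift (v ≫ a) (by rwa [Category.assoc])
      exact ⟨hpb.lift v w hwv.symm, hpb.lift_fst _ _ _⟩
  obtain ⟨e, he⟩ := hn.iso hp₁ker
  -- e : N ≅ P, e.hom ≫ p₁ = n
  -- j : Ka ⟶ P
  have hj0 : ka ≫ a = (0 : Ka ⟶ Kb) ≫ kb := by
    rw [hca.isKernelOf.w, zero_comp]
  set j := hpb.lift ka 0 hj0 with hjdef
  have hj₁ : j ≫ p₁ = ka := hpb.lift_fst _ _ _
  have hj₂ : j ≫ p₂ = 0 := hpb.lift_snd _ _ _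
  have hjmono : Mono j := by
    constructor
    intro W s s' hss
    have := hca.isKernelOf.mono'
    rw [← cancel_mono ka, ← hj₁, ← Category.assoc, ← Category.assoc, hss]
  have hjker : IsKernelOf j p₂ := by
    refine isKernelOf_mk hj₂ hjmono ?_
    intro W v hv
    obtain ⟨w, hwv⟩ := hca.isKernelOf.lift (v ≫ p₁)
      (by rw [Category.assoc, hw, ← Category.assoc, hv, zero_comp])
    refine ⟨w, hpb.hom_ext ?_ ?_⟩
    · rw [Category.assoc, hj₁, hwv]
    · rw [Category.assoc, hj₂, comp_zero, hv]
  have hconf : S.IsConflation j p₂ := conflation_of_isKernelOf hp₂ hjker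
  refine ⟨j ≫ e.inv, e.hom ≫ p₂, ?_, ?_, ?_⟩
  · rw [Category.assoc, ← he, ← Category.assoc]
    simp [hj₁]
  · rw [Category.assoc, ← hw, ← Category.assoc, he]
  · exact S.iso_closed (Iso.refl Ka) e.symm (Iso.refl Kb)
      (by simp) (by simp) hconf

/-- Splicing two conflations gives an exact pair. -/
lemma exactAt_mk {W X Y Z V : C} {e : W ⟶ X} {m : X ⟶ Y} {p : Y ⟶ Z} {m' : Z ⟶ V}
    (he : S.IsDeflation e) (hmp : S.IsConflation m p) (hm' : S.IsInflation m') :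
    S.ExactAt (e ≫ m) (p ≫ m') := by
  constructor
  · exact ⟨X, e, m, he, hmp.isInflation, rfl,
      hmp.isKernelOf.comp_mono m' hm'.mono⟩
  · exact ⟨Z, p, m', hmp.isDeflation, hm', rfl,
      hmp.isCokernelOf.epi_comp e he.epi⟩

end SnakeHelpers2

end ConflationStruct
/-- **Short snake lemma.**  Let `E` be a deflation-exact category satisfying axiom
(R3+).  Given a morphism of conflations with admissible vertical morphisms
`f₁, f₂, f₃`, there is a natural connecting morphism `δ` such that
`0 → K₁ → K₂ → K₃ →δ→ C₁ → C₂ → C₃ → 0` is exact, where `Kᵢ = ker fᵢ`,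
`Cᵢ = coker fᵢ`, the maps `ψᵢ, ψᵢ'` are the induced ones, `ψ₁` is an inflation and
`ψ₂'` is a deflation. -/
theorem short_snake_lemma {C : Type u} [Category.{v} C] [Preadditive C]
    [HasZeroObject C] [HasFiniteBiproducts C] (S : ConflationStruct C)
    (hDE : S.IsDeflationExact) (hR3p : S.AxiomR3plus)
    {A₁ A₂ A₃ B₁ B₂ B₃ : C}
    (iA : A₁ ⟶ A₂) (pA : A₂ ⟶ A₃) (iB : B₁ ⟶ B₂) (pB : B₂ ⟶ B₃)
    (f₁ : A₁ ⟶ B₁) (f₂ : A₂ ⟶ B₂) (f₃ : A₃ ⟶ B₃)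
    (hA : S.IsConflation iA pA) (hB : S.IsConflation iB pB)
    (hf₁ : S.IsAdmissible f₁) (hf₂ : S.IsAdmissible f₂) (hf₃ : S.IsAdmissible f₃)
    (hsq₁ : iA ≫ f₂ = f₁ ≫ iB) (hsq₂ : pA ≫ f₃ = f₂ ≫ pB) :
    ∃ (K₁ K₂ K₃ C₁ C₂ C₃ : C)
      (k₁ : K₁ ⟶ A₁) (k₂ : K₂ ⟶ A₂) (k₃ : K₃ ⟶ A₃)
      (c₁ : B₁ ⟶ C₁) (c₂ : B₂ ⟶ C₂) (c₃ : B₃ ⟶ C₃)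
      (ψ₁ : K₁ ⟶ K₂) (ψ₂ : K₂ ⟶ K₃) (δ : K₃ ⟶ C₁) (ψ₁' : C₁ ⟶ C₂) (ψ₂' : C₂ ⟶ C₃),
      IsKernelOf k₁ f₁ ∧ IsKernelOf k₂ f₂ ∧ IsKernelOf k₃ f₃ ∧
      IsCokernelOf c₁ f₁ ∧ IsCokernelOf c₂ f₂ ∧ IsCokernelOf c₃ f₃ ∧
      ψ₁ ≫ k₂ = k₁ ≫ iA ∧ ψ₂ ≫ k₃ = k₂ ≫ pA ∧
      c₁ ≫ ψ₁' = iB ≫ c₂ ∧ c₂ ≫ ψ₂' = pB ≫ c₃ ∧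
      S.IsInflation ψ₁ ∧ S.IsDeflation ψ₂' ∧
      S.ExactAt (0 : (0 : C) ⟶ K₁) ψ₁ ∧ S.ExactAt ψ₁ ψ₂ ∧ S.ExactAt ψ₂ δ ∧
      S.ExactAt δ ψ₁' ∧ S.ExactAt ψ₁' ψ₂' ∧ S.ExactAt ψ₂' (0 : C₃ ⟶ (0 : C)) := by
  classical
  obtain ⟨I₁, e₁, m₁, he₁, hm₁, hf1⟩ := hf₁
  obtain ⟨I₂, e₂, m₂, he₂, hm₂, hf2⟩ := hf₂
  obtain ⟨I₃, e₃, m₃, he₃, hm₃, hf3⟩ := hf₃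
  obtain ⟨K₁, k₁, hK₁⟩ := he₁
  obtain ⟨K₂, k₂, hK₂⟩ := he₂
  obtain ⟨K₃, k₃, hK₃⟩ := he₃
  obtain ⟨C₁, c₁, hC₁⟩ := hm₁
  obtain ⟨C₂, c₂, hC₂⟩ := hm₂
  obtain ⟨C₃, c₃, hC₃⟩ := hm₃
  haveI hiAm : Mono iA := hA.isKernelOf.mono'
  haveI hiBm : Mono iB := hB.isKernelOf.mono'
  haveI hk₁m : Mono k₁ := hK₁.isKernelOf.mono'
  haveI hk₂m : Mono k₂ := hK₂.isKernelOf.mono'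
  haveI hk₃m : Mono k₃ := hK₃.isKernelOf.mono'
  haveI hm₁m : Mono m₁ := hC₁.isKernelOf.mono'
  haveI hm₂m : Mono m₂ := hC₂.isKernelOf.mono'
  haveI hm₃m : Mono m₃ := hC₃.isKernelOf.mono'
  haveI he₁e : Epi e₁ := hK₁.isCokernelOf.epi'
  haveI he₂e : Epi e₂ := hK₂.isCokernelOf.epi'
  haveI hc₁e : Epi c₁ := hC₁.isCokernelOf.epi'
  haveI hc₂e : Epi c₂ := hC₂.isCokernelOf.epi'
  -- kernels and cokernels of the vertical maps
  have hker₁ : IsKernelOf k₁ f₁ := by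
    rw [← hf1]; exact hK₁.isKernelOf.comp_mono m₁ hm₁m
  have hker₂ : IsKernelOf k₂ f₂ := by
    rw [← hf2]; exact hK₂.isKernelOf.comp_mono m₂ hm₂m
  have hker₃ : IsKernelOf k₃ f₃ := by
    rw [← hf3]; exact hK₃.isKernelOf.comp_mono m₃ hm₃m
  have hcoker₁ : IsCokernelOf c₁ f₁ := by
    rw [← hf1]; exact hC₁.isCokernelOf.epi_comp e₁ he₁e
  have hcoker₂ : IsCokernelOf c₂ f₂ := by
    rw [← hf2]; exact hC₂.isCokernelOf.epi_comp e₂ he₂e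
  have hcoker₃ : IsCokernelOf c₃ f₃ := by
    rw [← hf3]; exact hC₃.isCokernelOf.epi_comp e₃ hK₃.isCokernelOf.epi'
  have hf₁c₁ : f₁ ≫ c₁ = 0 := hcoker₁.w
  have hf₂c₂ : f₂ ≫ c₂ = 0 := hcoker₂.w
  have hf₃c₃ : f₃ ≫ c₃ = 0 := hcoker₃.w
  -- the induced maps on kernels and cokernels
  obtain ⟨ψ₁, hψ₁⟩ := hker₂.lift (k₁ ≫ iA)
    (by rw [Category.assoc, hsq₁, ← Category.assoc, hker₁.w, zero_comp])
  obtain ⟨ψ₂, hψ₂⟩ := hker₃.lift (k₂ ≫ pA)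
    (by rw [Category.assoc, hsq₂, ← Category.assoc, hker₂.w, zero_comp])
  obtain ⟨ψ₁', hψ₁'⟩ := hcoker₁.desc (iB ≫ c₂)
    (by rw [← Category.assoc, ← hsq₁, Category.assoc, hf₂c₂, comp_zero])
  obtain ⟨ψ₂', hψ₂'⟩ := hcoker₂.desc (pB ≫ c₃)
    (by rw [← Category.assoc, ← hsq₂, Category.assoc, hf₃c₃, comp_zero])
  -- ψ₂' is a deflation
  have hpBc₃ : S.IsDeflation (pB ≫ c₃) := hDE.R1 hB.isDeflation hC₃.isDeflation
  have hψ₂'d : S.IsDeflation ψ₂' := hR3p c₂ ψ₂' (by rwa [hψ₂'])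
  obtain ⟨M, ρ, hMconf⟩ := id hψ₂'d
  haveI hρm : Mono ρ := hMconf.isKernelOf.mono'
  -- π : C₁ ⟶ M
  have hψψ' : ψ₁' ≫ ψ₂' = 0 := by
    rw [← cancel_epi c₁, ← Category.assoc, hψ₁', Category.assoc, hψ₂',
      ← Category.assoc, hB.isKernelOf.w, zero_comp, comp_zero]
  obtain ⟨π, hπ⟩ := hMconf.isKernelOf.lift ψ₁' hψψ'
  have hψ₁r := reassoc_of% hψ₁
  have hψ₂r := reassoc_of% hψ₂
  have hψ₁'r := reassoc_of% hψ₁'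
  have hψ₂'r := reassoc_of% hψ₂'
  have hπr := reassoc_of% hπ
  have hsq₁r := reassoc_of% hsq₁
  have hsq₂r := reassoc_of% hsq₂
  have hf1r := reassoc_of% hf1
  have hf2r := reassoc_of% hf2
  have hf3r := reassoc_of% hf3
  -- the pullback T of pA along k₃
  obtain ⟨T, q, r, hT, hrd⟩ := hDE.R2 hA.isDeflation k₃
  have hTw : q ≫ pA = r ≫ k₃ := hT.w
  have hTwr := reassoc_of% hTw
  haveI hre : Epi r := hrd.epi
  -- j : A₁ ⟶ T, kernel of r
  obtain ⟨j, hj₁, hj₂⟩ : ∃ j : A₁ ⟶ T, j ≫ q = iA ∧ j ≫ r = 0 :=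
    ⟨hT.lift iA 0 (by rw [hA.isKernelOf.w, zero_comp]), hT.lift_fst _ _ _, hT.lift_snd _ _ _⟩
  haveI hjm : Mono j := by
    constructor
    intro W s s' hss
    rw [← cancel_mono iA, ← hj₁, ← Category.assoc, ← Category.assoc, hss]
  have hjker : IsKernelOf j r := by
    refine isKernelOf_mk hj₂ hjm ?_
    intro W v hv
    obtain ⟨w, hw⟩ := hA.isKernelOf.lift (v ≫ q)
      (by rw [Category.assoc, hTw, ← Category.assoc, hv, zero_comp])
    refine ⟨w, hT.hom_ext ?_ ?_⟩
    · rw [Category.assoc, hj₁, hw]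
    · rw [Category.assoc, hj₂, comp_zero, hv]
  have hjconf : S.IsConflation j r := ConflationStruct.conflation_of_isKernelOf hrd hjker
  -- t : T ⟶ B₁
  obtain ⟨t, ht⟩ := hB.isKernelOf.lift (q ≫ f₂)
    (by rw [Category.assoc, ← hsq₂, ← Category.assoc, hTw, Category.assoc, hker₃.w, comp_zero])
  have htr := reassoc_of% ht
  have hjt : j ≫ t = f₁ := by
    rw [← cancel_mono iB, Category.assoc, ht, ← Category.assoc, hj₁, hsq₁]
  -- u : K₂ ⟶ T, kernel of t
  obtain ⟨u, hu₁, hu₂⟩ : ∃ u : K₂ ⟶ T, u ≫ q = k₂ ∧ u ≫ r = ψ₂ :=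
    ⟨hT.lift k₂ ψ₂ hψ₂.symm, hT.lift_fst _ _ _, hT.lift_snd _ _ _⟩
  haveI hum : Mono u := by
    constructor
    intro W s s' hss
    rw [← cancel_mono k₂, ← hu₁, ← Category.assoc, ← Category.assoc, hss]
  have hu₂r := reassoc_of% hu₂
  have hu₁r := reassoc_of% hu₁
  have hut : u ≫ t = 0 := by
    rw [← cancel_mono iB, Category.assoc, ht, ← Category.assoc, hu₁, hker₂.w, zero_comp]
  have huker : IsKernelOf u t := by
    refine isKernelOf_mk hut hum ?_
    intro W v hv
    obtain ⟨w, hw⟩ := hker₂.lift (v ≫ q)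
      (by rw [Category.assoc, ← ht, ← Category.assoc, hv, zero_comp])
    refine ⟨w, hT.hom_ext ?_ ?_⟩
    · rw [Category.assoc, hu₁, hw]
    · rw [← cancel_mono k₃]
      simp only [Category.assoc]
      rw [hu₂r, hψ₂, ← hTw, ← Category.assoc, ← Category.assoc, hw]
  -- the connecting morphism δ
  obtain ⟨δ, hδ⟩ := hjconf.isCokernelOf.desc (t ≫ c₁)
    (by rw [← Category.assoc, hjt, hf₁c₁])
  have hδr := reassoc_of% hδ
  have hδψ₁' : δ ≫ ψ₁' = 0 := by
    rw [← cancel_epi r, comp_zero, ← Category.assoc, hδ, Category.assoc, hψ₁',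
      ← Category.assoc, ht, Category.assoc, hf₂c₂, comp_zero]
  have hδπ : δ ≫ π = 0 := by
    rw [← cancel_mono ρ, Category.assoc, hπ, hδψ₁', zero_comp]
  -- the object N = ker (pB ≫ c₃) = ker (c₂ ≫ ψ₂')
  obtain ⟨N, n, hNconf⟩ := id hpBc₃
  obtain ⟨β, γ, hβ, hγ, hβγ⟩ :=
    ConflationStruct.ker_comp hDE hB hC₃.isKernelOf hC₃.isDeflation hNconf.isKernelOf
  have hn' : IsKernelOf n (c₂ ≫ ψ₂') := by rw [hψ₂']; exact hNconf.isKernelOf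
  obtain ⟨α', θ, hα', hθ, hα'θ⟩ :=
    ConflationStruct.ker_comp hDE hC₂ hMconf.isKernelOf hMconf.isDeflation hn'
  have hβr := reassoc_of% hβ
  have hγr := reassoc_of% hγ
  have hα'r := reassoc_of% hα'
  have hθr := reassoc_of% hθ
  -- pullbacks E and F used to prove that π is a deflation
  obtain ⟨E, η, ζ, hE, hζd⟩ := hDE.R2 hK₃.isDeflation γ
  have hEr := reassoc_of% hE.w
  obtain ⟨F, σ, ξ, hF, hξd⟩ := hDE.R2 hA.isDeflation η
  have hFr := reassoc_of% hF.w
  obtain ⟨hmap, hhmap⟩ := hB.isKernelOf.lift (ξ ≫ ζ ≫ n - σ ≫ f₂)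
    (by
      simp only [Preadditive.sub_comp, Category.assoc]
      rw [← hγ, ← hEr, hf3, ← hFr, hsq₂, sub_self])
  have hhmapr := reassoc_of% hhmap
  -- π is a deflation
  have hπd : S.IsDeflation π := by
    refine hR3p (hmap ≫ c₁) π ?_
    have key : (hmap ≫ c₁) ≫ π = ξ ≫ ζ ≫ θ := by
      rw [← cancel_mono ρ]
      simp only [Category.assoc]
      rw [hπ, hψ₁', hhmapr]
      simp only [Preadditive.sub_comp, Category.assoc]
      rw [hf₂c₂, comp_zero, sub_zero, ← hθ]
    rw [key]
    exact hDE.R1 hξd (hDE.R1 hζd hα'θ.isDeflation)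
  -- the conflation (ν, π)
  obtain ⟨L, ν, hLconf⟩ := id hπd
  haveI hνm : Mono ν := hLconf.isKernelOf.mono'
  -- λ : K₃ ⟶ L
  obtain ⟨lam, hlam⟩ := hLconf.isKernelOf.lift δ hδπ
  have hlamr := reassoc_of% hlam
  -- the object G = ker (c₁ ≫ π)
  obtain ⟨G, g', hGconf⟩ := id (hDE.R1 hC₁.isDeflation hπd)
  obtain ⟨α'', τ, hα'', hτ, hα''τ⟩ :=
    ConflationStruct.ker_comp hDE hC₁ hLconf.isKernelOf hπd hGconf.isKernelOf
  have hτr := reassoc_of% hτ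
  -- φ : G ⟶ I₂
  obtain ⟨φ, hφ⟩ := hC₂.isKernelOf.lift (g' ≫ iB)
    (by
      simp only [Category.assoc]
      rw [← hψ₁', ← Category.assoc, ← hπ, ← Category.assoc]
      rw [Category.assoc g' c₁ π, hGconf.isKernelOf.w, zero_comp])
  have hφr := reassoc_of% hφ
  -- the pullback V, used to prove that λ is a deflation
  obtain ⟨V, ς, d, hV, hdd⟩ := hDE.R2 hK₂.isDeflation φ
  have hVr := reassoc_of% hV.w
  obtain ⟨χ, hχ⟩ := hker₃.lift (ς ≫ pA)
    (by
      simp only [Category.assoc]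
      rw [hsq₂, ← hf2]
      simp only [Category.assoc]
      rw [hVr, hφr, hB.isKernelOf.w, comp_zero, comp_zero])
  obtain ⟨ω, hω₁, hω₂⟩ : ∃ ω : V ⟶ T, ω ≫ q = ς ∧ ω ≫ r = χ :=
    ⟨hT.lift ς χ hχ.symm, hT.lift_fst _ _ _, hT.lift_snd _ _ _⟩
  have hω₁r := reassoc_of% hω₁
  have hω₂r := reassoc_of% hω₂
  have hωt : ω ≫ t = d ≫ g' := by
    rw [← cancel_mono iB, Category.assoc, ht, hω₁r, ← hf2, hVr, hφ]
    simp only [Category.assoc]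
  have hχlam : χ ≫ lam = d ≫ τ := by
    rw [← cancel_mono ν, Category.assoc, hlam, ← hω₂, Category.assoc, hδ, ← Category.assoc,
      hωt, Category.assoc, Category.assoc, hτ]
  have hlamd : S.IsDeflation lam :=
    hR3p χ lam (by rw [hχlam]; exact hDE.R1 hdd hα''τ.isDeflation)
  -- the conflation (μ, lam)
  obtain ⟨J, μ, hJconf⟩ := id hlamd
  haveI hμm : Mono μ := hJconf.isKernelOf.mono'
  -- ε : K₂ ⟶ J
  have hψ₂lam : ψ₂ ≫ lam = 0 := by
    rw [← cancel_mono ν, Category.assoc, hlam, zero_comp, ← hu₂, Category.assoc, hδ,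
      ← Category.assoc, hut, zero_comp]
  obtain ⟨ε, hε⟩ := hJconf.isKernelOf.lift ψ₂ hψ₂lam
  have hεr := reassoc_of% hε
  -- the pullback H and H', used to prove that ε is a deflation
  obtain ⟨H, ι, ϖ, hH, hϖd⟩ := hDE.R2 hrd μ
  have hHr := reassoc_of% hH.w
  obtain ⟨κ, hκ⟩ := hC₁.isKernelOf.lift (ι ≫ t)
    (by
      simp only [Category.assoc]
      rw [← hδ, ← Category.assoc, hH.w, Category.assoc, ← hlam,
        ← Category.assoc μ lam ν, hJconf.isKernelOf.w, zero_comp, comp_zero])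
  have hκr := reassoc_of% hκ
  obtain ⟨H', σ', ξ', hH', hξ'd⟩ := hDE.R2 hK₁.isDeflation κ
  have hH'r := reassoc_of% hH'.w
  obtain ⟨v, hv⟩ := huker.lift (ξ' ≫ ι - σ' ≫ j)
    (by
      simp only [Preadditive.sub_comp, Category.assoc]
      rw [← hκ, ← hH'r, hf1, hjt, sub_self])
  have hvr := reassoc_of% hv
  -- ε is a deflation
  have hεd : S.IsDeflation ε := by
    refine hR3p v ε ?_
    have key : v ≫ ε = ξ' ≫ ϖ := by
      rw [← cancel_mono μ, Category.assoc, hε, ← hu₂, ← Category.assoc, hv]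
      simp only [Preadditive.sub_comp, Category.assoc]
      rw [hH.w, hj₂, comp_zero, sub_zero]
    rw [key]
    exact hDE.R1 hξ'd hϖd
  -- ψ₁ is a kernel of ε
  have hψ₁ψ₂ : ψ₁ ≫ ψ₂ = 0 := by
    rw [← cancel_mono k₃, Category.assoc, hψ₂, ← Category.assoc, hψ₁, Category.assoc,
      hA.isKernelOf.w, comp_zero, zero_comp]
  have hψ₁ε : ψ₁ ≫ ε = 0 := by
    rw [← cancel_mono μ, Category.assoc, hε, hψ₁ψ₂, zero_comp]
  haveI hψ₁m : Mono ψ₁ := by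
    constructor
    intro W s s' hss
    rw [← cancel_mono k₁, ← cancel_mono iA]
    simp only [Category.assoc]
    rw [← hψ₁, ← Category.assoc, ← Category.assoc, hss]
  have hψ₁ker : IsKernelOf ψ₁ ε := by
    refine isKernelOf_mk hψ₁ε hψ₁m ?_
    intro W v' hv'
    have hv'ψ₂ : v' ≫ ψ₂ = 0 := by
      rw [← hε, ← Category.assoc, hv', zero_comp]
    obtain ⟨w, hw⟩ := hA.isKernelOf.lift (v' ≫ k₂)
      (by rw [Category.assoc, ← hψ₂, ← Category.assoc, hv'ψ₂, zero_comp])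
    have hwf₁ : w ≫ f₁ = 0 := by
      rw [← cancel_mono iB, Category.assoc, ← hsq₁, ← Category.assoc, hw, Category.assoc,
        hker₂.w, comp_zero, zero_comp]
    obtain ⟨w', hw'⟩ := hker₁.lift w hwf₁
    refine ⟨w', ?_⟩
    rw [← cancel_mono k₂, Category.assoc, hψ₁, ← Category.assoc, hw', hw]
  have hεconf : S.IsConflation ψ₁ ε := ConflationStruct.conflation_of_isKernelOf hεd hψ₁ker
  -- assemble everything
  refine ⟨K₁, K₂, K₃, C₁, C₂, C₃, k₁, k₂, k₃, c₁, c₂, c₃, ψ₁, ψ₂, δ, ψ₁', ψ₂',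
    hker₁, hker₂, hker₃, hcoker₁, hcoker₂, hcoker₃, hψ₁, hψ₂, hψ₁', hψ₂',
    hεconf.isInflation, hMconf.isDeflation, ?_, ?_, ?_, ?_, ?_, ?_⟩
  · have := ConflationStruct.exactAt_mk (S := S)
      (ConflationStruct.isDeflation_id hDE hR3p (0 : C))
      (ConflationStruct.conflation_zero_id hDE hR3p K₁) hεconf.isInflation
    simpa using this
  · have := ConflationStruct.exactAt_mk (S := S)
      (ConflationStruct.isDeflation_id hDE hR3p K₁) hεconf hJconf.isInflation
    rw [hε] at this
    simpa using this
  · have := ConflationStruct.exactAt_mk (S := S) hεd hJconf hLconf.isInflation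
    rwa [hε, hlam] at this
  · have := ConflationStruct.exactAt_mk (S := S) hlamd hLconf hMconf.isInflation
    rwa [hlam, hπ] at this
  · have := ConflationStruct.exactAt_mk (S := S) hπd hMconf
      (ConflationStruct.conflation_id_zero hDE hR3p C₃).isInflation
    rw [hπ] at this
    simpa using this
  · have := ConflationStruct.exactAt_mk (S := S) hMconf.isDeflation
      (ConflationStruct.conflation_id_zero hDE hR3p C₃)
      (ConflationStruct.conflation_zero_id hDE hR3p (0 : C)).isInflation
    simpa using this
end

section
/- Let E be a deflation-exact category satisfying axiom (R0*). The following are equivalent: (1) E satisfies axiom (R3); (2) conflations are closed under retracts, i.e., if a kernel-cokernel pair X → Y → Z admits morphisms of sequences s to a conflation X' ↣ Y' ↠ Z' and r back from it with r∘s the identity of (X → Y → Z), then X → Y → Z is a conflation; (3) conflations are closed under direct summands, i.e., if the direct sum of two kernel-cokernel pairs X → Y → Z and X' → Y' → Z' is a conflation X ⊕ X' → Y ⊕ Y' → Z ⊕ Z', then both summands are conflations. -/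
open CategoryTheory CategoryTheory.Limits ZeroObject

attribute [local instance] CategoryTheory.Limits.hasBinaryBiproducts_of_finite_biproducts

universe v u

section AuxLemmas

variable {C : Type u} [Category.{v} C] [Preadditive C] [HasZeroObject C]
  [HasFiniteBiproducts C] (S : ConflationStruct C)

/-- Transport of deflations along isomorphisms. -/
lemma ConflationStruct.aux_defl_congr {Y Z Y' Z' : C} {g : Y ⟶ Z} (hg : S.IsDeflation g)
    (eY : Y ≅ Y') (eZ : Z ≅ Z') (g' : Y' ⟶ Z') (hcomm : g ≫ eZ.hom = eY.hom ≫ g') :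
    S.IsDeflation g' := by
  obtain ⟨X, f, hc⟩ := hg
  exact ⟨X, f ≫ eY.hom, S.iso_closed (Iso.refl X) eY eZ (by simp) hcomm hc⟩

/-- If `g` is a deflation and `m` is a kernel of `g`, then `(m, g)` is a conflation. -/
lemma ConflationStruct.aux_conf_of_isKernel {X Y Z : C} {m : X ⟶ Y} {g : Y ⟶ Z}
    (hg : S.IsDeflation g) (w : m ≫ g = 0) (hm : IsLimit (KernelFork.ofι m w)) :
    S.IsConflation m g := by
  obtain ⟨X₀, f₀, hc⟩ := hg
  obtain ⟨h₀⟩ := (S.kernelCokernel hc).isKernel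
  have he : (IsLimit.conePointUniqueUpToIso h₀ hm).hom ≫ m = f₀ := by
    simpa using IsLimit.conePointUniqueUpToIso_hom_comp h₀ hm WalkingParallelPair.zero
  exact S.iso_closed (IsLimit.conePointUniqueUpToIso h₀ hm) (Iso.refl Y) (Iso.refl Z)
    (by simpa using he.symm) (by simp) hc

/-- Identity morphisms are deflations. -/
lemma ConflationStruct.aux_id_defl (hDE : S.IsDeflationExact) (X : C) :
    S.IsDeflation (𝟙 X) := by
  obtain ⟨P, p₁, p₂, hpb, hp₂⟩ := hDE.R2 hDE.R0 (0 : X ⟶ (0 : C))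
  have comm : (0 : X ⟶ (0:C)) ≫ 𝟙 (0:C) = 𝟙 X ≫ (0 : X ⟶ (0:C)) := by simp
  have hmy : IsPullback (0 : X ⟶ (0:C)) (𝟙 X) (𝟙 (0:C)) (0 : X ⟶ (0:C)) :=
    IsPullback.of_isLimit (PullbackCone.IsLimit.mk comm (fun s => s.snd)
      (fun s => (isZero_zero C).eq_of_tgt _ _)
      (fun s => by simp)
      (fun s m _ h2 => by simpa using h2))
  refine S.aux_defl_congr hp₂ (hmy.isoIsPullback _ _ hpb).symm (Iso.refl X) (𝟙 X) ?_
  simpa using (hmy.isoIsPullback_inv_snd _ _ hpb).symm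

/-- Binary biproducts of deflations are deflations. -/
lemma ConflationStruct.aux_map_defl (hDE : S.IsDeflationExact) {Y Z Y' Z' : C}
    {g : Y ⟶ Z} {g' : Y' ⟶ Z'} (hg : S.IsDeflation g) (hg' : S.IsDeflation g') :
    S.IsDeflation (biprod.map g g') := by
  have h1 : S.IsDeflation (biprod.map g (𝟙 Y')) := by
    obtain ⟨P, q₁, q₂, hpb, hq₂⟩ := hDE.R2 hg (biprod.fst : Z ⊞ Y' ⟶ Z)
    have comm : (biprod.fst : Y ⊞ Y' ⟶ Y) ≫ g = biprod.map g (𝟙 Y') ≫ biprod.fst := by simp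
    have hmy : IsPullback (biprod.fst : Y ⊞ Y' ⟶ Y) (biprod.map g (𝟙 Y')) g biprod.fst :=
      IsPullback.of_isLimit (PullbackCone.IsLimit.mk comm
        (fun s => biprod.lift s.fst (s.snd ≫ biprod.snd))
        (fun s => by simp)
        (fun s => by
          apply biprod.hom_ext
          · simpa using s.condition
          · simp)
        (fun s m h1 h2 => by
          apply biprod.hom_ext
          · simpa using h1
          · have h3 := congrArg (fun t => t ≫ (biprod.snd : Z ⊞ Y' ⟶ Y')) h2
            simpa using h3))
    refine S.aux_defl_congr hq₂ (hmy.isoIsPullback _ _ hpb).symm (Iso.refl _) _ ?_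
    simpa using (hmy.isoIsPullback_inv_snd _ _ hpb).symm
  have h2 : S.IsDeflation (biprod.map (𝟙 Z) g') := by
    obtain ⟨P, q₁, q₂, hpb, hq₂⟩ := hDE.R2 hg' (biprod.snd : Z ⊞ Z' ⟶ Z')
    have comm : (biprod.snd : Z ⊞ Y' ⟶ Y') ≫ g' = biprod.map (𝟙 Z) g' ≫ biprod.snd := by simp
    have hmy : IsPullback (biprod.snd : Z ⊞ Y' ⟶ Y') (biprod.map (𝟙 Z) g') g'
        (biprod.snd : Z ⊞ Z' ⟶ Z') :=
      IsPullback.of_isLimit (PullbackCone.IsLimit.mk comm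
        (fun s => biprod.lift (s.snd ≫ biprod.fst) s.fst)
        (fun s => by simp)
        (fun s => by
          apply biprod.hom_ext
          · simp
          · simpa using s.condition)
        (fun s m h1 h2 => by
          apply biprod.hom_ext
          · have h3 := congrArg (fun t => t ≫ (biprod.fst : Z ⊞ Z' ⟶ Z)) h2
            simpa using h3
          · simpa using h1))
    refine S.aux_defl_congr hq₂ (hmy.isoIsPullback _ _ hpb).symm (Iso.refl _) _ ?_
    simpa using (hmy.isoIsPullback_inv_snd _ _ hpb).symm
  have hcomp : biprod.map g g' = biprod.map g (𝟙 Y') ≫ biprod.map (𝟙 Z) g' := by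
    apply biprod.hom_ext' <;> simp
  rw [hcomp]
  exact hDE.R1 h1 h2

/-- The biproduct with a zero object. -/
noncomputable def auxBiprodZero (X : C) : X ⊞ (0 : C) ≅ X where
  hom := biprod.fst
  inv := biprod.lift (𝟙 X) 0
  hom_inv_id := by
    apply biprod.hom_ext
    · simp
    · exact (isZero_zero C).eq_of_tgt _ _
  inv_hom_id := by simp

/-- The biproduct with a zero object, on the left. -/
noncomputable def auxZeroBiprod (X : C) : (0 : C) ⊞ X ≅ X where
  hom := biprod.snd
  inv := biprod.lift 0 (𝟙 X)
  hom_inv_id := by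
    apply biprod.hom_ext
    · exact (isZero_zero C).eq_of_tgt _ _
    · simp
  inv_hom_id := by simp

/-- (R3) implies that kernel-cokernel pairs that are retracts of conflations are conflations. -/
lemma ConflationStruct.aux_R3_imp_retr (hDE : S.IsDeflationExact) (hR3 : S.AxiomR3)
    {X Y Z X' Y' Z' : C} (f : X ⟶ Y) (g : Y ⟶ Z) (f' : X' ⟶ Y') (g' : Y' ⟶ Z')
    (sZ : Z ⟶ Z') (rY : Y' ⟶ Y) (rZ : Z' ⟶ Z)
    (hpair : IsKernelCokernelPair f g) (hconf' : S.IsConflation f' g')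
    (hr2 : g' ≫ rZ = rY ≫ g) (hiZ : sZ ≫ rZ = 𝟙 Z) :
    S.IsConflation f g := by
  obtain ⟨hkf⟩ := hpair.isKernel
  have hkg : HasKernel g := HasLimit.mk ⟨_, hkf⟩
  obtain ⟨P, p₁, p₂, hpb, hp₂⟩ := hDE.R2 (⟨X', f', hconf'⟩ : S.IsDeflation g') sZ
  have hw : (p₁ ≫ rY) ≫ g = p₂ := by
    rw [Category.assoc, ← hr2, ← Category.assoc, hpb.w, Category.assoc, hiZ, Category.comp_id]
  have hdg : S.IsDeflation g := hR3 (p₁ ≫ rY) g hkg (by rw [hw]; exact hp₂)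
  exact S.aux_conf_of_isKernel hdg hpair.comp_zero hkf

/-- Closure of conflations under direct summands implies axiom (R3). -/
lemma ConflationStruct.aux_summ_imp_R3 (hDE : S.IsDeflationExact) (hR0s : S.AxiomR0star)
    (hSUMM : ∀ (X Y Z X' Y' Z' : C) (f : X ⟶ Y) (g : Y ⟶ Z) (f' : X' ⟶ Y') (g' : Y' ⟶ Z'),
      IsKernelCokernelPair f g → IsKernelCokernelPair f' g' →
      S.IsConflation (biprod.map f f') (biprod.map g g') →
      S.IsConflation f g ∧ S.IsConflation f' g') :
    S.AxiomR3 := by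
  intro A B Q i p hker hd
  haveI := hker
  set k : kernel p ⟶ B := kernel.ι p with hkdef
  haveI : Mono k := by rw [hkdef]; infer_instance
  have hkp : k ≫ p = 0 := by rw [hkdef]; exact kernel.condition p
  -- Step 1 : `j := biprod.desc i k` is a deflation
  obtain ⟨P, p₁, p₂, hpb, hp₂⟩ := hDE.R2 hd p
  have hsq : p₁ ≫ (i ≫ p) = p₂ ≫ p := hpb.w
  obtain ⟨s, hs₁, hs₂⟩ : ∃ s : A ⟶ P, s ≫ p₁ = 𝟙 A ∧ s ≫ p₂ = i :=
    ⟨hpb.lift (𝟙 A) i (by rw [Category.id_comp]), hpb.lift_fst _ _ _, hpb.lift_snd _ _ _⟩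
  obtain ⟨κ, hκ₁, hκ₂⟩ : ∃ κ : kernel p ⟶ P, κ ≫ p₁ = 0 ∧ κ ≫ p₂ = k :=
    ⟨hpb.lift 0 k (by rw [zero_comp, hkp]), hpb.lift_fst _ _ _, hpb.lift_snd _ _ _⟩
  have hw0 : ((𝟙 P - p₁ ≫ s) ≫ p₂) ≫ p = 0 := by
    simp only [Preadditive.sub_comp, Category.id_comp, Category.assoc]
    rw [reassoc_of% hs₂, hsq, sub_self]
  obtain ⟨ρ, hρ⟩ : ∃ ρ : P ⟶ kernel p, ρ ≫ k = (𝟙 P - p₁ ≫ s) ≫ p₂ :=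
    ⟨kernel.lift p _ hw0, by rw [hkdef]; exact kernel.lift_ι _ _ _⟩
  have hsρ : s ≫ ρ = 0 := by
    rw [← cancel_mono k, Category.assoc, hρ, zero_comp]
    simp only [Preadditive.comp_sub, Preadditive.sub_comp, Category.assoc, Category.id_comp,
      Category.comp_id]
    rw [reassoc_of% hs₁, hs₂, sub_self]
  have hκρ : κ ≫ ρ = 𝟙 (kernel p) := by
    rw [← cancel_mono k, Category.assoc, hρ, Category.id_comp]
    simp only [Preadditive.comp_sub, Preadditive.sub_comp, Category.assoc, Category.id_comp,
      Category.comp_id]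
    rw [reassoc_of% hκ₁, zero_comp, sub_zero, hκ₂]
  have hom_inv : biprod.desc s κ ≫ biprod.lift p₁ ρ = 𝟙 (A ⊞ kernel p) := by
    apply biprod.hom_ext' <;> apply biprod.hom_ext <;>
      simp [hs₁, hsρ, hκ₁, hκρ]
  have inv_hom : biprod.lift p₁ ρ ≫ biprod.desc s κ = 𝟙 P := by
    have h1 : (biprod.lift p₁ ρ ≫ biprod.desc s κ) ≫ p₁ = 𝟙 P ≫ p₁ := by
      rw [Category.id_comp, biprod.lift_desc, Preadditive.add_comp,
        Category.assoc, Category.assoc, hs₁, Category.comp_id, hκ₁, comp_zero, add_zero]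
    have h2 : (biprod.lift p₁ ρ ≫ biprod.desc s κ) ≫ p₂ = 𝟙 P ≫ p₂ := by
      rw [Category.id_comp, biprod.lift_desc, Preadditive.add_comp,
        Category.assoc, Category.assoc, hs₂, hκ₂, hρ]
      simp only [Preadditive.sub_comp, Category.id_comp, Category.assoc, hs₂]
      abel
    exact hpb.hom_ext h1 h2
  have hj : S.IsDeflation (biprod.desc i k) := by
    refine S.aux_defl_congr hp₂
      (Iso.symm ⟨biprod.desc s κ, biprod.lift p₁ ρ, hom_inv, inv_hom⟩) (Iso.refl B) _ ?_
    show p₂ ≫ 𝟙 B = biprod.lift p₁ ρ ≫ biprod.desc i k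
    rw [Category.comp_id, biprod.lift_desc, hρ]
    simp only [Preadditive.sub_comp, Category.id_comp, Category.assoc, hs₂]
    abel
  -- Step 2 : the deflation `Θ := biprod.map p 0`
  have hfstA : S.IsDeflation (biprod.fst : A ⊞ kernel p ⟶ A) := by
    have h0 : S.IsDeflation (biprod.map (𝟙 A) (0 : kernel p ⟶ (0:C))) :=
      S.aux_map_defl hDE (S.aux_id_defl hDE A) (hR0s _)
    refine S.aux_defl_congr h0 (Iso.refl _) (auxBiprodZero A) _ ?_
    simp [auxBiprodZero]
  have hδ : S.IsDeflation ((biprod.fst : A ⊞ kernel p ⟶ A) ≫ (i ≫ p)) := hDE.R1 hfstA hd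
  have hsnd : S.IsDeflation (biprod.snd : B ⊞ Q ⟶ Q) := by
    have h0 : S.IsDeflation (biprod.map (0 : B ⟶ (0:C)) (𝟙 Q)) :=
      S.aux_map_defl hDE (hR0s B) (S.aux_id_defl hDE Q)
    refine S.aux_defl_congr h0 (Iso.refl _) (auxZeroBiprod Q) _ ?_
    simp [auxZeroBiprod]
  have hdescp1 : S.IsDeflation (biprod.desc p (𝟙 Q)) := by
    have hsh : (biprod.lift biprod.fst (biprod.snd + biprod.fst ≫ p) : B ⊞ Q ⟶ B ⊞ Q) ≫
        biprod.lift biprod.fst (biprod.snd - biprod.fst ≫ p) = 𝟙 (B ⊞ Q) := by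
      apply biprod.hom_ext <;> simp
    have hsh' : (biprod.lift biprod.fst (biprod.snd - biprod.fst ≫ p) : B ⊞ Q ⟶ B ⊞ Q) ≫
        biprod.lift biprod.fst (biprod.snd + biprod.fst ≫ p) = 𝟙 (B ⊞ Q) := by
      apply biprod.hom_ext <;> simp
    refine S.aux_defl_congr hsnd
      (Iso.symm ⟨biprod.lift biprod.fst (biprod.snd + biprod.fst ≫ p),
        biprod.lift biprod.fst (biprod.snd - biprod.fst ≫ p), hsh, hsh'⟩)
      (Iso.refl Q) _ ?_
    show biprod.snd ≫ 𝟙 Q =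
      biprod.lift biprod.fst (biprod.snd - biprod.fst ≫ p) ≫ biprod.desc p (𝟙 Q)
    rw [Category.comp_id, biprod.lift_desc, Category.comp_id]
    abel
  have hD : S.IsDeflation
      (biprod.map (𝟙 B) ((biprod.fst : A ⊞ kernel p ⟶ A) ≫ (i ≫ p)) ≫ biprod.desc p (𝟙 Q)) :=
    hDE.R1 (S.aux_map_defl hDE (S.aux_id_defl hDE B) hδ) hdescp1
  have hδj : biprod.desc i k ≫ p = (biprod.fst : A ⊞ kernel p ⟶ A) ≫ (i ≫ p) := by
    apply biprod.hom_ext' <;> simp [hkp]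
  have hβ : (biprod.lift (biprod.fst + biprod.snd ≫ biprod.desc i k) biprod.snd :
      B ⊞ (A ⊞ kernel p) ⟶ B ⊞ (A ⊞ kernel p)) ≫
      biprod.lift (biprod.fst - biprod.snd ≫ biprod.desc i k) biprod.snd = 𝟙 _ := by
    apply biprod.hom_ext <;> simp
  have hβ' : (biprod.lift (biprod.fst - biprod.snd ≫ biprod.desc i k) biprod.snd :
      B ⊞ (A ⊞ kernel p) ⟶ B ⊞ (A ⊞ kernel p)) ≫
      biprod.lift (biprod.fst + biprod.snd ≫ biprod.desc i k) biprod.snd = 𝟙 _ := by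
    apply biprod.hom_ext <;> simp
  have hΘ : S.IsDeflation (biprod.map p (0 : A ⊞ kernel p ⟶ (0:C))) := by
    refine S.aux_defl_congr hD
      (⟨biprod.lift (biprod.fst + biprod.snd ≫ biprod.desc i k) biprod.snd,
        biprod.lift (biprod.fst - biprod.snd ≫ biprod.desc i k) biprod.snd, hβ, hβ'⟩ :
        B ⊞ (A ⊞ kernel p) ≅ B ⊞ (A ⊞ kernel p))
      (auxBiprodZero Q).symm _ ?_
    apply biprod.hom_ext' <;> apply biprod.hom_ext <;>
      simp [auxBiprodZero, Preadditive.add_comp, hδj]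
  -- Step 3 : `biprod.map k 𝟙` is a kernel of `Θ`, hence we get a conflation
  have wΘ : biprod.map k (𝟙 (A ⊞ kernel p)) ≫ biprod.map p (0 : A ⊞ kernel p ⟶ (0:C)) = 0 := by
    apply biprod.hom_ext' <;> apply biprod.hom_ext <;> simp [hkp]
  have hmk : IsLimit (KernelFork.ofι (biprod.map k (𝟙 (A ⊞ kernel p))) wΘ) := by
    refine KernelFork.IsLimit.ofι _ _
      (fun {W'} t ht => biprod.lift (kernel.lift p (t ≫ biprod.fst)
        (by have h1 := congrArg (fun u => u ≫ (biprod.fst : Q ⊞ (0:C) ⟶ Q)) ht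
            simpa using h1)) (t ≫ biprod.snd))
      (fun {W'} t ht => ?_) (fun {W'} t ht m hm => ?_)
    · apply biprod.hom_ext
      · simp [hkdef]
      · simp
    · apply biprod.hom_ext
      · rw [biprod.lift_fst, ← cancel_mono k]
        have h1 := congrArg (fun u => u ≫ (biprod.fst : B ⊞ (A ⊞ kernel p) ⟶ B)) hm
        simp only [Category.assoc, biprod.map_fst] at h1
        rw [Category.assoc, h1, hkdef, kernel.lift_ι]
      · have h2 := congrArg (fun u => u ≫ (biprod.snd : B ⊞ (A ⊞ kernel p) ⟶ A ⊞ kernel p)) hm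
        simp only [Category.assoc, biprod.map_snd, Category.comp_id] at h2
        simpa using h2
  have hconfΘ : S.IsConflation (biprod.map k (𝟙 (A ⊞ kernel p)))
      (biprod.map p (0 : A ⊞ kernel p ⟶ (0:C))) := S.aux_conf_of_isKernel hΘ wΘ hmk
  obtain ⟨hcoΘ⟩ := (S.kernelCokernel hconfΘ).isCokernel
  -- `p` is an epimorphism
  have hepi : ∀ {T : C} (x y : Q ⟶ T), p ≫ x = p ≫ y → x = y := by
    intro T x y hxy
    have h1 : biprod.map p (0 : A ⊞ kernel p ⟶ (0:C)) ≫ (biprod.fst ≫ x) =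
        biprod.map p (0 : A ⊞ kernel p ⟶ (0:C)) ≫ (biprod.fst ≫ y) := by
      rw [← Category.assoc, ← Category.assoc, biprod.map_fst, Category.assoc, Category.assoc,
        hxy]
    have h2 : (biprod.fst : Q ⊞ (0:C) ⟶ Q) ≫ x = biprod.fst ≫ y :=
      Cofork.IsColimit.hom_ext hcoΘ (by simpa using h1)
    have h3 := congrArg (fun u => (biprod.inl : Q ⟶ Q ⊞ (0:C)) ≫ u) h2
    simpa using h3
  -- `(k, p)` is a kernel-cokernel pair
  haveI hepiP : Epi p := ⟨fun x y hxy => hepi x y hxy⟩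
  have pair1 : IsKernelCokernelPair k p := by
    refine ⟨hkp, ⟨?_⟩, ⟨?_⟩⟩
    · exact kernelIsKernel p
    · refine CokernelCofork.IsColimit.ofπ' p hkp (fun {T} t ht => ?_)
      have hw' : biprod.map k (𝟙 (A ⊞ kernel p)) ≫
          biprod.desc t (0 : A ⊞ kernel p ⟶ T) = 0 := by
        apply biprod.hom_ext' <;> simp [ht]
      obtain ⟨u, hu⟩ := CokernelCofork.IsColimit.desc' hcoΘ (biprod.desc t 0) hw'
      refine ⟨(biprod.inl : Q ⟶ Q ⊞ (0:C)) ≫ u, ?_⟩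
      have h1 := congrArg (fun v => (biprod.inl : B ⟶ B ⊞ (A ⊞ kernel p)) ≫ v) hu
      simpa using h1
  -- the trivial kernel-cokernel pair
  have pair2 : IsKernelCokernelPair (𝟙 (A ⊞ kernel p)) (0 : A ⊞ kernel p ⟶ (0:C)) := by
    refine ⟨by simp, ⟨?_⟩, ⟨?_⟩⟩
    · exact KernelFork.IsLimit.ofι _ _ (fun {W'} t _ => t) (fun {W'} t _ => Category.comp_id t)
        (fun {W'} t _ m hm => by simpa using hm)
    · exact CokernelCofork.IsColimit.ofπ _ _ (fun {T} t _ => 0)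
        (fun {T} t ht => by rw [comp_zero]; simpa using ht.symm)
        (fun {T} t ht m hm => (isZero_zero C).eq_of_src _ _)
  exact ⟨kernel p, k,
    (hSUMM _ _ _ _ _ _ k p (𝟙 (A ⊞ kernel p)) (0 : A ⊞ kernel p ⟶ (0:C))
      pair1 pair2 hconfΘ).1⟩

end AuxLemmas

/-- Let `E` be a deflation-exact category satisfying axiom (R0*).  The following
are equivalent: (1) axiom (R3); (2) conflations are closed under retracts;
(3) conflations are closed under direct summands. -/
theorem R3_iff_retracts_iff_summands {C : Type u} [Category.{v} C] [Preadditive C]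
    [HasZeroObject C] [HasFiniteBiproducts C] (S : ConflationStruct C)
    (hDE : S.IsDeflationExact) (hR0s : S.AxiomR0star) :
    (S.AxiomR3 ↔
      (∀ (X Y Z X' Y' Z' : C) (f : X ⟶ Y) (g : Y ⟶ Z) (f' : X' ⟶ Y') (g' : Y' ⟶ Z')
        (sX : X ⟶ X') (sY : Y ⟶ Y') (sZ : Z ⟶ Z')
        (rX : X' ⟶ X) (rY : Y' ⟶ Y) (rZ : Z' ⟶ Z),
        IsKernelCokernelPair f g → S.IsConflation f' g' →
        f ≫ sY = sX ≫ f' → g ≫ sZ = sY ≫ g' →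
        f' ≫ rY = rX ≫ f → g' ≫ rZ = rY ≫ g →
        sX ≫ rX = 𝟙 X → sY ≫ rY = 𝟙 Y → sZ ≫ rZ = 𝟙 Z →
        S.IsConflation f g)) ∧
    (S.AxiomR3 ↔
      (∀ (X Y Z X' Y' Z' : C) (f : X ⟶ Y) (g : Y ⟶ Z) (f' : X' ⟶ Y') (g' : Y' ⟶ Z'),
        IsKernelCokernelPair f g → IsKernelCokernelPair f' g' →
        S.IsConflation (biprod.map f f') (biprod.map g g') →
        S.IsConflation f g ∧ S.IsConflation f' g')) := by
  have dirA : S.AxiomR3 →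
      (∀ (X Y Z X' Y' Z' : C) (f : X ⟶ Y) (g : Y ⟶ Z) (f' : X' ⟶ Y') (g' : Y' ⟶ Z')
        (sX : X ⟶ X') (sY : Y ⟶ Y') (sZ : Z ⟶ Z')
        (rX : X' ⟶ X) (rY : Y' ⟶ Y) (rZ : Z' ⟶ Z),
        IsKernelCokernelPair f g → S.IsConflation f' g' →
        f ≫ sY = sX ≫ f' → g ≫ sZ = sY ≫ g' →
        f' ≫ rY = rX ≫ f → g' ≫ rZ = rY ≫ g →
        sX ≫ rX = 𝟙 X → sY ≫ rY = 𝟙 Y → sZ ≫ rZ = 𝟙 Z →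
        S.IsConflation f g) := by
    intro hR3 X Y Z X' Y' Z' f g f' g' sX sY sZ rX rY rZ hpair hconf' _ _ _ hr2 _ _ hiZ
    exact S.aux_R3_imp_retr hDE hR3 f g f' g' sZ rY rZ hpair hconf' hr2 hiZ
  have dirB :
      (∀ (X Y Z X' Y' Z' : C) (f : X ⟶ Y) (g : Y ⟶ Z) (f' : X' ⟶ Y') (g' : Y' ⟶ Z')
        (sX : X ⟶ X') (sY : Y ⟶ Y') (sZ : Z ⟶ Z')
        (rX : X' ⟶ X) (rY : Y' ⟶ Y) (rZ : Z' ⟶ Z),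
        IsKernelCokernelPair f g → S.IsConflation f' g' →
        f ≫ sY = sX ≫ f' → g ≫ sZ = sY ≫ g' →
        f' ≫ rY = rX ≫ f → g' ≫ rZ = rY ≫ g →
        sX ≫ rX = 𝟙 X → sY ≫ rY = 𝟙 Y → sZ ≫ rZ = 𝟙 Z →
        S.IsConflation f g) →
      (∀ (X Y Z X' Y' Z' : C) (f : X ⟶ Y) (g : Y ⟶ Z) (f' : X' ⟶ Y') (g' : Y' ⟶ Z'),
        IsKernelCokernelPair f g → IsKernelCokernelPair f' g' →
        S.IsConflation (biprod.map f f') (biprod.map g g') →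
        S.IsConflation f g ∧ S.IsConflation f' g') := by
    intro hR X Y Z X' Y' Z' f g f' g' hp hp' hc
    constructor
    · exact hR X Y Z (X ⊞ X') (Y ⊞ Y') (Z ⊞ Z') f g (biprod.map f f') (biprod.map g g')
        biprod.inl biprod.inl biprod.inl biprod.fst biprod.fst biprod.fst hp hc
        (biprod.inl_map _ _).symm (biprod.inl_map _ _).symm
        (biprod.map_fst _ _) (biprod.map_fst _ _)
        biprod.inl_fst biprod.inl_fst biprod.inl_fst
    · exact hR X' Y' Z' (X ⊞ X') (Y ⊞ Y') (Z ⊞ Z') f' g' (biprod.map f f') (biprod.map g g')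
        biprod.inr biprod.inr biprod.inr biprod.snd biprod.snd biprod.snd hp' hc
        (biprod.inr_map _ _).symm (biprod.inr_map _ _).symm
        (biprod.map_snd _ _) (biprod.map_snd _ _)
        biprod.inr_snd biprod.inr_snd biprod.inr_snd
  have dirC :
      (∀ (X Y Z X' Y' Z' : C) (f : X ⟶ Y) (g : Y ⟶ Z) (f' : X' ⟶ Y') (g' : Y' ⟶ Z'),
        IsKernelCokernelPair f g → IsKernelCokernelPair f' g' →
        S.IsConflation (biprod.map f f') (biprod.map g g') →
        S.IsConflation f g ∧ S.IsConflation f' g') → S.AxiomR3 :=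
    fun h => S.aux_summ_imp_R3 hDE hR0s h
  exact ⟨⟨dirA, fun h => dirC (dirB h)⟩, ⟨fun h => dirB (dirA h), dirC⟩⟩
end

section
/- Let E be a deflation-exact category satisfying axiom (R0*). The following are equivalent: (1) E satisfies axiom (R3); (2) whenever (0, g) : X ⊕ Y → Z is a deflation and g : Y → Z admits a kernel, g is a deflation; (3) a morphism g : Y → Z admitting a kernel is a deflation if and only if there exists a deflation f' : Y' ↠ Y such that the composition g∘f' is a deflation. -/
open CategoryTheory CategoryTheory.Limits ZeroObject

attribute [local instance] CategoryTheory.Limits.hasBinaryBiproducts_of_finite_biproducts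

universe v u

section AuxLemmas

variable {C : Type u} [Category.{v} C] [Preadditive C] [HasZeroObject C]
  [HasFiniteBiproducts C] (S : ConflationStruct C)

/-- Deflations are closed under precomposition with an isomorphism. -/
lemma defl_iso_comp {Y' Y Z : C} (e : Y' ≅ Y) {g : Y ⟶ Z} (hg : S.IsDeflation g) :
    S.IsDeflation (e.hom ≫ g) := by
  obtain ⟨X, f, hc⟩ := hg
  exact ⟨X, f ≫ e.inv, S.iso_closed (Iso.refl X) e.symm (Iso.refl Z)
    (by simp) (by simp) hc⟩

/-- If two squares over the same cospan are pullbacks and the second leg of one is a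
deflation, so is the second leg of the other. -/
lemma defl_of_isPullback {P P' X Y Z : C} {a : P ⟶ X} {b : P ⟶ Y} {a' : P' ⟶ X}
    {b' : P' ⟶ Y} {g : X ⟶ Z} {h : Y ⟶ Z} (h1 : IsPullback a b g h)
    (h2 : IsPullback a' b' g h) (hb : S.IsDeflation b) : S.IsDeflation b' := by
  have := defl_iso_comp S (h2.isoIsPullback _ _ h1) hb
  rwa [IsPullback.isoIsPullback_hom_snd] at this

/-- Identities are deflations. -/
lemma id_defl (hDE : S.IsDeflationExact) (A : C) : S.IsDeflation (𝟙 A) := by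
  obtain ⟨P, p₁, p₂, hpb, hd⟩ := hDE.R2 hDE.R0 (0 : A ⟶ (0 : C))
  exact defl_of_isPullback S hpb (IsPullback.id_vert (0 : A ⟶ (0 : C))) hd

/-- The second projection of a biproduct is a deflation. -/
lemma snd_defl (hDE : S.IsDeflationExact) (hR0s : S.AxiomR0star) (A B : C) :
    S.IsDeflation (biprod.snd : A ⊞ B ⟶ B) := by
  obtain ⟨P, p₁, p₂, hpb, hd⟩ := hDE.R2 (hR0s A) (0 : B ⟶ (0 : C))
  exact defl_of_isPullback S hpb (IsPullback.of_has_biproduct A B) hd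

/-- The first projection of a biproduct is a deflation. -/
lemma fst_defl (hDE : S.IsDeflationExact) (hR0s : S.AxiomR0star) (A B : C) :
    S.IsDeflation (biprod.fst : A ⊞ B ⟶ A) := by
  have h := defl_iso_comp S (biprod.braiding A B) (snd_defl S hDE hR0s B A)
  rwa [show (biprod.braiding A B).hom ≫ (biprod.snd : B ⊞ A ⟶ A) = biprod.fst by
    apply biprod.hom_ext' <;> simp] at h

/-- `p ⊞ 𝟙` is a deflation when `p` is. -/
lemma map_id_defl (hDE : S.IsDeflationExact) {X Z : C} (Y : C) {p : X ⟶ Z}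
    (hp : S.IsDeflation p) : S.IsDeflation (biprod.map p (𝟙 Y)) := by
  obtain ⟨P, p₁, p₂, hpb, hd⟩ := hDE.R2 hp (biprod.fst : Z ⊞ Y ⟶ Z)
  refine defl_of_isPullback S hpb (a' := (biprod.fst : X ⊞ Y ⟶ X)) ?_ hd
  refine IsPullback.of_isLimit' ⟨by simp⟩ ?_
  refine PullbackCone.IsLimit.mk _ (fun s => biprod.lift s.fst (s.snd ≫ biprod.snd))
    (by simp) (fun s => ?_) (fun s m hm₁ hm₂ => ?_)
  · apply biprod.hom_ext
    · simpa using s.condition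
    · simp
  · apply biprod.hom_ext
    · simpa using hm₁
    · have := hm₂ =≫ (biprod.snd : Z ⊞ Y ⟶ Y)
      simpa using this
  
/-- `desc 1 q` is a deflation. -/
lemma desc_id_defl (hDE : S.IsDeflationExact) (hR0s : S.AxiomR0star) {Z Y : C}
    (q : Y ⟶ Z) : S.IsDeflation (biprod.desc (𝟙 Z) q) := by
  let e : Z ⊞ Y ≅ Z ⊞ Y :=
    { hom := biprod.lift (biprod.desc (𝟙 Z) q) biprod.snd
      inv := biprod.lift (biprod.desc (𝟙 Z) (-q)) biprod.snd
      hom_inv_id := by apply biprod.hom_ext' <;> apply biprod.hom_ext <;> simp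
      inv_hom_id := by apply biprod.hom_ext' <;> apply biprod.hom_ext <;> simp }
  have h := defl_iso_comp S e (fst_defl S hDE hR0s Z Y)
  rwa [show e.hom ≫ (biprod.fst : Z ⊞ Y ⟶ Z) = biprod.desc (𝟙 Z) q by simp [e]] at h

/-- If `p` is a deflation then so is `desc p q` for any `q`. -/
lemma desc_defl_left (hDE : S.IsDeflationExact) (hR0s : S.AxiomR0star)
    {X Y Z : C} {p : X ⟶ Z} (hp : S.IsDeflation p) (q : Y ⟶ Z) :
    S.IsDeflation (biprod.desc p q) := by
  have h := hDE.R1 (map_id_defl S hDE Y hp) (desc_id_defl S hDE hR0s q)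
  rwa [show biprod.map p (𝟙 Y) ≫ biprod.desc (𝟙 Z) q = biprod.desc p q by
    apply biprod.hom_ext' <;> simp] at h

/-- If `p` is a deflation then so is `desc q p` for any `q`. -/
lemma desc_defl_right (hDE : S.IsDeflationExact) (hR0s : S.AxiomR0star)
    {X Y Z : C} {p : X ⟶ Z} (hp : S.IsDeflation p) (q : Y ⟶ Z) :
    S.IsDeflation (biprod.desc q p) := by
  have h := defl_iso_comp S (biprod.braiding Y X) (desc_defl_left S hDE hR0s hp q)
  rwa [show (biprod.braiding Y X).hom ≫ biprod.desc p q = biprod.desc q p by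
    apply biprod.hom_ext' <;> simp] at h

end AuxLemmas

/-- Let `E` be a deflation-exact category satisfying axiom (R0*).  The following
are equivalent: (1) axiom (R3); (2) if `(0, g) : X ⊕ Y ⟶ Z` is a deflation and `g`
admits a kernel, then `g` is a deflation; (3) a morphism `g : Y ⟶ Z` admitting a
kernel is a deflation if and only if there is a deflation `f' : Y' ↠ Y` such that
`f' ≫ g` is a deflation. -/
theorem R3_equivalent_formulations {C : Type u} [Category.{v} C] [Preadditive C]
    [HasZeroObject C] [HasFiniteBiproducts C] (S : ConflationStruct C)
    (hDE : S.IsDeflationExact) (hR0s : S.AxiomR0star) :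
    (S.AxiomR3 ↔ ∀ (X Y Z : C) (g : Y ⟶ Z),
      S.IsDeflation (biprod.desc (0 : X ⟶ Z) g) → HasKernel g → S.IsDeflation g) ∧
    (S.AxiomR3 ↔ ∀ (Y Z : C) (g : Y ⟶ Z), HasKernel g →
      (S.IsDeflation g ↔
        ∃ (Y' : C) (f' : Y' ⟶ Y), S.IsDeflation f' ∧ S.IsDeflation (f' ≫ g))) := by
  constructor
  · constructor
    · -- (1) ⇒ (2)
      intro hR3 X Y Z g hdesc hker
      refine hR3 (biprod.snd : X ⊞ Y ⟶ Y) g hker ?_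
      rwa [show (biprod.snd : X ⊞ Y ⟶ Y) ≫ g = biprod.desc (0 : X ⟶ Z) g by
        apply biprod.hom_ext' <;> simp]
    · -- (2) ⇒ (1)
      intro h2 A B Q i p hker hip
      have hd1 : S.IsDeflation (biprod.desc (i ≫ p) p) :=
        desc_defl_left S hDE hR0s hip p
      let e : A ⊞ B ≅ A ⊞ B :=
        { hom := biprod.lift biprod.fst (biprod.snd - biprod.fst ≫ i)
          inv := biprod.lift biprod.fst (biprod.snd + biprod.fst ≫ i)
          hom_inv_id := by
            apply biprod.hom_ext <;>
              simp [Preadditive.comp_sub, Preadditive.comp_add, Category.assoc]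
          inv_hom_id := by
            apply biprod.hom_ext <;>
              simp [Preadditive.comp_sub, Preadditive.comp_add, Category.assoc] }
      have hd2 := defl_iso_comp S e hd1
      rw [show e.hom ≫ biprod.desc (i ≫ p) p = biprod.desc (0 : A ⟶ Q) p by
        apply biprod.hom_ext' <;>
          simp [e, Preadditive.sub_comp, Category.assoc]] at hd2
      exact h2 A B Q p hd2 hker
  · constructor
    · -- (1) ⇒ (3)
      intro hR3 Y Z g hker
      constructor
      · intro hg
        exact ⟨Y, 𝟙 Y, id_defl S hDE Y, by simpa using hg⟩
      · rintro ⟨Y', f', hf', hfg⟩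
        exact hR3 f' g hker hfg
    · -- (3) ⇒ (1)
      intro h3 A B Q i p hker hip
      refine (h3 B Q p hker).mpr ⟨A ⊞ B, biprod.desc i (𝟙 B), ?_, ?_⟩
      · exact desc_defl_right S hDE hR0s (id_defl S hDE B) i
      · rw [show biprod.desc i (𝟙 B) ≫ p = biprod.desc (i ≫ p) p by
          apply biprod.hom_ext' <;> simp]
        exact desc_defl_left S hDE hR0s hip p
end

section
/- Let E be a deflation-exact category. (1) If E satisfies axiom (R3), then for any morphism f : X → Y having a cokernel g : Y → Z, if there exists an inflation h : Y ↣ U such that h∘f is an inflation, then f is an inflation. (2) If E satisfies axiom (R3+), then for any morphism f : X → Y (no cokernel hypothesis), if there exists an inflation h : Y ↣ U such that h∘f is an inflation, then f is an inflation. -/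
open CategoryTheory CategoryTheory.Limits ZeroObject

attribute [local instance] CategoryTheory.Limits.hasBinaryBiproducts_of_finite_biproducts

universe v u

section ProofHelpers

variable {C : Type u} [Category.{v} C] [Preadditive C] [HasZeroObject C]
  [HasFiniteBiproducts C] (S : ConflationStruct C)

/-- If `g` is a deflation and `f` is a kernel of `g`, then `f` is an inflation. -/
lemma inflation_of_isKernel_of_deflation {X Y Z : C} {f : X ⟶ Y} {g : Y ⟶ Z}
    (hg : S.IsDeflation g) (w : f ≫ g = 0)
    (hf : IsLimit (KernelFork.ofι f w)) : S.IsInflation f := by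
  obtain ⟨W, c, hconf⟩ := hg
  have pair := S.kernelCokernel hconf
  obtain ⟨hc⟩ := pair.isKernel
  obtain ⟨l, hl⟩ := KernelFork.IsLimit.lift' hc f w
  obtain ⟨l', hl'⟩ := KernelFork.IsLimit.lift' hf c pair.comp_zero
  simp only [Fork.ι_ofι] at hl hl'
  have h1 : l ≫ l' = 𝟙 X := Fork.IsLimit.hom_ext hf (by
    simp only [Fork.ι_ofι, Category.assoc, Category.id_comp, hl', hl])
  have h2 : l' ≫ l = 𝟙 W := Fork.IsLimit.hom_ext hc (by
    simp only [Fork.ι_ofι, Category.assoc, Category.id_comp, hl, hl'])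
  refine ⟨Z, g, S.iso_closed (⟨l', l, h2, h1⟩ : W ≅ X) (Iso.refl Y) (Iso.refl Z) ?_ ?_ hconf⟩
  · simpa using hl'.symm
  · simp

/-- Auxiliary kernel recognition: if `f ≫ h` is a kernel of `v`, `h` is mono, and every
morphism killed by `p` also has `(· ≫ h) ≫ v = 0`, then `f` is a kernel of `p`. -/
def isKernel_aux {X Y U V Q : C} {f : X ⟶ Y} {h : Y ⟶ U} {v : U ⟶ V} {p : Y ⟶ Q}
    {hv0 : (f ≫ h) ≫ v = 0}
    (hmono : ∀ {T : C} (a b : T ⟶ Y), a ≫ h = b ≫ h → a = b)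
    (hker_fh : IsLimit (KernelFork.ofι (f ≫ h) hv0))
    (w0 : f ≫ p = 0)
    (hfac : ∀ {T : C} (s : T ⟶ Y), s ≫ p = 0 → (s ≫ h) ≫ v = 0) :
    IsLimit (KernelFork.ofι f w0) := by
  refine KernelFork.IsLimit.ofι f w0
    (fun {T} s hs => (KernelFork.IsLimit.lift' hker_fh (s ≫ h) (hfac s hs)).1) ?_ ?_
  · intro T s hs
    apply hmono
    have := (KernelFork.IsLimit.lift' hker_fh (s ≫ h) (hfac s hs)).2
    simp only [Fork.ι_ofι] at this
    rw [Category.assoc, this]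
  · intro T s hs m hm
    apply Fork.IsLimit.hom_ext hker_fh
    have := (KernelFork.IsLimit.lift' hker_fh (s ≫ h) (hfac s hs)).2
    simp only [Fork.ι_ofι] at this ⊢
    rw [this, ← hm, Category.assoc]

end ProofHelpers

/-- Let `E` be a deflation-exact category.  (1) If `E` satisfies axiom (R3), then
any morphism `f : X ⟶ Y` having a cokernel such that `f ≫ h` is an inflation for
some inflation `h : Y ↣ U` is itself an inflation.  (2) If `E` satisfies axiom
(R3+), the cokernel hypothesis can be dropped. -/
theorem R3_gives_weak_L3 {C : Type u} [Category.{v} C] [Preadditive C]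
    [HasZeroObject C] [HasFiniteBiproducts C] (S : ConflationStruct C)
    (hDE : S.IsDeflationExact) :
    (S.AxiomR3 → ∀ (X Y Z U : C) (f : X ⟶ Y) (g : Y ⟶ Z) (h : Y ⟶ U),
      IsCokernelOf g f → S.IsInflation h → S.IsInflation (f ≫ h) →
      S.IsInflation f) ∧
    (S.AxiomR3plus → ∀ (X Y U : C) (f : X ⟶ Y) (h : Y ⟶ U),
      S.IsInflation h → S.IsInflation (f ≫ h) → S.IsInflation f) := by
  constructor
  · -- Case (1): axiom (R3), `f` has a cokernel `g`.
    intro hR3 X Y Z U f g h hcok hInfh hInffh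
    obtain ⟨wg, ⟨hgco⟩⟩ := hcok
    obtain ⟨U', u, hconfU⟩ := hInfh
    obtain ⟨V, v, hconfV⟩ := hInffh
    have pairU := S.kernelCokernel hconfU
    obtain ⟨hker_h⟩ := pairU.isKernel
    have hu0 : h ≫ u = 0 := pairU.comp_zero
    have pairV := S.kernelCokernel hconfV
    obtain ⟨hker_fh⟩ := pairV.isKernel
    obtain ⟨hcok_v⟩ := pairV.isCokernel
    have hv0 : (f ≫ h) ≫ v = 0 := pairV.comp_zero
    have hmono : ∀ {T : C} (a b : T ⟶ Y), a ≫ h = b ≫ h → a = b := fun a b hab =>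
      Fork.IsLimit.hom_ext hker_h (by simpa using hab)
    -- `t : Z ⟶ V` with `g ≫ t = h ≫ v`
    obtain ⟨t, ht⟩ : ∃ t : Z ⟶ V, g ≫ t = h ≫ v := by
      obtain ⟨t, ht⟩ := CokernelCofork.IsColimit.desc' hgco (h ≫ v)
        (by rw [← Category.assoc]; exact hv0)
      exact ⟨t, by simpa using ht⟩
    -- `w : V ⟶ U'` with `v ≫ w = u`
    obtain ⟨w, hw⟩ : ∃ w : V ⟶ U', v ≫ w = u := by
      obtain ⟨w, hw⟩ := CokernelCofork.IsColimit.desc' hcok_v u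
        (by rw [Category.assoc, hu0, comp_zero])
      exact ⟨w, by simpa using hw⟩
    have htw : t ≫ w = 0 := by
      apply Cofork.IsColimit.hom_ext hgco
      simp only [Cofork.π_ofπ, comp_zero, ← Category.assoc, ht]
      rw [Category.assoc, hw, hu0]
    -- pull back the deflation `v` along `t`
    obtain ⟨P, p₁, p₂, hPB, hdeflp₂⟩ := hDE.R2 ⟨X, f ≫ h, hconfV⟩ t
    have hsq : p₁ ≫ v = p₂ ≫ t := hPB.w
    have hp₁u : p₁ ≫ u = 0 := by
      rw [← hw, ← Category.assoc, hsq, Category.assoc, htw, comp_zero]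
    obtain ⟨n, hn⟩ : ∃ n : P ⟶ Y, n ≫ h = p₁ := by
      obtain ⟨n, hn⟩ := KernelFork.IsLimit.lift' hker_h p₁ hp₁u
      exact ⟨n, by simpa using hn⟩
    -- the canonical map `Y ⟶ P`
    have hm := hPB.lift_fst h g ht.symm
    have hm' := hPB.lift_snd h g ht.symm
    set m : Y ⟶ P := hPB.lift h g ht.symm with hmdef
    have hmn : m ≫ n = 𝟙 Y := hmono _ _ (by
      rw [Category.assoc, hn, hm, Category.id_comp])
    -- the kernel of `p₂`
    obtain ⟨KP, kp, hconfP⟩ := hdeflp₂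
    have pairP := S.kernelCokernel hconfP
    obtain ⟨hcok_p₂⟩ := pairP.isCokernel
    have hkp0 : kp ≫ p₂ = 0 := pairP.comp_zero
    have hkpv : (kp ≫ p₁) ≫ v = 0 := by
      rw [Category.assoc, hsq, ← Category.assoc, hkp0, zero_comp]
    obtain ⟨b, hb⟩ : ∃ b : KP ⟶ X, b ≫ (f ≫ h) = kp ≫ p₁ := by
      obtain ⟨b, hb⟩ := KernelFork.IsLimit.lift' hker_fh (kp ≫ p₁) hkpv
      exact ⟨b, by simpa using hb⟩
    have hkpn : kp ≫ n = b ≫ f := hmono _ _ (by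
      rw [Category.assoc, hn, Category.assoc]; exact hb.symm)
    have hkpg : kp ≫ (n ≫ g) = 0 := by
      rw [← Category.assoc, hkpn, Category.assoc, wg, comp_zero]
    obtain ⟨σ, hσ⟩ : ∃ σ : Z ⟶ Z, p₂ ≫ σ = n ≫ g - p₂ := by
      obtain ⟨σ, hσ⟩ := CokernelCofork.IsColimit.desc' hcok_p₂ (n ≫ g - p₂)
        (by rw [Preadditive.comp_sub, hkpg, hkp0, sub_zero])
      exact ⟨σ, by simpa using hσ⟩
    have hgσ : g ≫ σ = 0 := by
      have : m ≫ p₂ ≫ σ = 0 := by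
        rw [hσ, Preadditive.comp_sub, ← Category.assoc, hmn, Category.id_comp, hm', sub_self]
      rw [← hm', Category.assoc, this]
    have hσ0 : σ = 0 := Cofork.IsColimit.hom_ext hgco (by
      simp only [Cofork.π_ofπ, comp_zero, hgσ])
    have hng : n ≫ g = p₂ := by
      have := hσ
      rw [hσ0, comp_zero] at this
      exact sub_eq_zero.mp this.symm
    -- `f` is a kernel of `g`
    have hfker : IsLimit (KernelFork.ofι f wg) :=
      isKernel_aux hmono hker_fh wg (fun {T} s hs => by
        rw [Category.assoc, ← ht, ← Category.assoc, hs, zero_comp])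
    have hkg : HasKernel g := HasLimit.mk ⟨_, hfker⟩
    have hgdefl : S.IsDeflation g := hR3 n g hkg (by rw [hng]; exact ⟨KP, kp, hconfP⟩)
    exact inflation_of_isKernel_of_deflation S hgdefl wg hfker
  · -- Case (2): axiom (R3+), no cokernel hypothesis.
    intro hR3p X Y U f h hInfh hInffh
    obtain ⟨U', u, hconfU⟩ := hInfh
    obtain ⟨V, v, hconfV⟩ := hInffh
    have pairU := S.kernelCokernel hconfU
    obtain ⟨hker_h⟩ := pairU.isKernel
    have hu0 : h ≫ u = 0 := pairU.comp_zero
    have pairV := S.kernelCokernel hconfV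
    obtain ⟨hker_fh⟩ := pairV.isKernel
    obtain ⟨hcok_v⟩ := pairV.isCokernel
    have hv0 : (f ≫ h) ≫ v = 0 := pairV.comp_zero
    have hmono : ∀ {T : C} (a b : T ⟶ Y), a ≫ h = b ≫ h → a = b := fun a b hab =>
      Fork.IsLimit.hom_ext hker_h (by simpa using hab)
    -- `w : V ⟶ U'` with `v ≫ w = u`
    obtain ⟨w, hw⟩ : ∃ w : V ⟶ U', v ≫ w = u := by
      obtain ⟨w, hw⟩ := CokernelCofork.IsColimit.desc' hcok_v u
        (by rw [Category.assoc, hu0, comp_zero])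
      exact ⟨w, by simpa using hw⟩
    -- by (R3+), `w` is a deflation with kernel `k`
    have hwdefl : S.IsDeflation w := hR3p v w (by rw [hw]; exact ⟨Y, h, hconfU⟩)
    obtain ⟨K, k, hconfW⟩ := hwdefl
    have pairW := S.kernelCokernel hconfW
    obtain ⟨hker_k⟩ := pairW.isKernel
    have hk0 : k ≫ w = 0 := pairW.comp_zero
    have hkmono : ∀ {T : C} (a b : T ⟶ K), a ≫ k = b ≫ k → a = b := fun a b hab =>
      Fork.IsLimit.hom_ext hker_k (by simp only [Fork.ι_ofι]; exact hab)
    -- `e : Y ⟶ K` with `e ≫ k = h ≫ v`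
    obtain ⟨e, he⟩ : ∃ e : Y ⟶ K, e ≫ k = h ≫ v := by
      obtain ⟨e, he⟩ := KernelFork.IsLimit.lift' hker_k (h ≫ v)
        (by rw [Category.assoc, hw, hu0])
      exact ⟨e, by simpa using he⟩
    -- pull back the deflation `v` along `k`
    obtain ⟨P, p₁, p₂, hPB, hdeflp₂⟩ := hDE.R2 ⟨X, f ≫ h, hconfV⟩ k
    have hsq : p₁ ≫ v = p₂ ≫ k := hPB.w
    have hp₁u : p₁ ≫ u = 0 := by
      rw [← hw, ← Category.assoc, hsq, Category.assoc, hk0, comp_zero]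
    obtain ⟨n, hn⟩ : ∃ n : P ⟶ Y, n ≫ h = p₁ := by
      obtain ⟨n, hn⟩ := KernelFork.IsLimit.lift' hker_h p₁ hp₁u
      exact ⟨n, by simpa using hn⟩
    have hm := hPB.lift_fst h e he.symm
    have hm' := hPB.lift_snd h e he.symm
    set m : Y ⟶ P := hPB.lift h e he.symm with hmdef
    have hmn : m ≫ n = 𝟙 Y := hmono _ _ (by
      rw [Category.assoc, hn, hm, Category.id_comp])
    have hne : n ≫ e = p₂ := hkmono _ _ (by
      rw [Category.assoc, he, ← Category.assoc, hn, hsq])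
    have hnm : n ≫ m = 𝟙 P := hPB.hom_ext
      (by rw [Category.assoc, hm, hn, Category.id_comp])
      (by rw [Category.assoc, hm', hne, Category.id_comp])
    -- transport the conflation ending in `p₂` to one ending in `e`
    obtain ⟨A, a, hconfP⟩ := hdeflp₂
    have hconfE : S.IsConflation (a ≫ n) e :=
      S.iso_closed (Iso.refl A) (⟨n, m, hnm, hmn⟩ : P ≅ Y) (Iso.refl K)
        (by simp) (by simpa using hne.symm) hconfP
    -- `f` is a kernel of `e`
    have hfe0 : f ≫ e = 0 := hkmono _ _ (by
      rw [Category.assoc, he, zero_comp, ← Category.assoc, hv0])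
    have hfker : IsLimit (KernelFork.ofι f hfe0) :=
      isKernel_aux hmono hker_fh hfe0 (fun {T} s hs => by
        rw [Category.assoc, ← he, ← Category.assoc, hs, zero_comp])
    exact inflation_of_isKernel_of_deflation S ⟨A, a ≫ n, hconfE⟩ hfe0 hfker
end
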